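/- The language of a Parikh constraint is PMTA-recognizable: let Σ be a finite alphabet, V = {X₁,…,X_r, Y₁,…,Y_k} a finite set of pairwise distinct variables, Σ_V = Σ × 𝒫(V), and write ξ(ρ) = (σ^ξ_ρ, θ^ξ_ρ) for ξ ∈ T^ω_{Σ_V}. Given constants c, d ∈ ℕ and coefficients c₁,…,c_r ≥ 1 and d₁,…,d_k ≥ 1, the language L(χ) = { ξ ∈ T^ω_{Σ_V} : c + Σ_{ρ ∈ {0,1}*} Σ_{i : X_i ∈ θ^ξ_ρ} c_i ≤ d + Σ_{ρ ∈ {0,1}*} Σ_{j : Y_j ∈ θ^ξ_ρ} d_j < ∞ }, where both (possibly infinite) sums are evaluated in ℕ ∪ {∞}, is PMTA-recognizable (by a PMTA of dimension 2). -/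

import Mathlib

/-!
Two states suffice. In the counting state the automaton adds up the weight vector
`(Σ_{Xᵢ ∈ θ} cᵢ, Σ_{Yⱼ ∈ θ} dⱼ)` of the letters it reads; it may switch to an accepting Muller
sink, which only reads letters of weight zero. A tree whose weights have finite support is
accepted by counting on a ball around the root containing that support, so the automaton accepts
exactly those trees whose total weight lies in the semilinear set `{w | c + w₀ ≤ d + w₁}`.
For weights in `ℕ`, a sum is finite in `ℕ∞` iff its support is finite, and both sums are finite
iff the right one is, by the inequality.
-/

/-- Positions in a binary tree: finite words over `{0,1}`. -/
abbrev Pos : Type := List Bool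

/-- Vectors of natural numbers of dimension `s`. -/
abbrev Vec (s : ℕ) : Type := Fin s → ℕ

/-- An infinite path: a sequence of positions starting at the root, each step
descending to a child. -/
def IsPath (π : ℕ → Pos) : Prop :=
  π 0 = [] ∧ ∀ i : ℕ, ∃ b : Bool, π (i + 1) = π i ++ [b]

/-- The set of values occurring infinitely often in a sequence. -/
def infOcc {Q : Type*} (g : ℕ → Q) : Set Q :=
  {q | {n : ℕ | g n = q}.Infinite}

/-- A linear subset of `ℕ^s`. -/
def IsLinearSetNat {s : ℕ} (C : Set (Vec s)) : Prop :=
  ∃ (l : ℕ) (v₀ : Vec s) (v : Fin l → Vec s),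
    C = {w | ∃ m : Fin l → ℕ, w = v₀ + ∑ i, m i • v i}

/-- A semilinear subset of `ℕ^s`: a finite union of linear sets. -/
def IsSemilinearSetNat {s : ℕ} (C : Set (Vec s)) : Prop :=
  ∃ (k : ℕ) (Cs : Fin k → Set (Vec s)),
    (∀ i, IsLinearSetNat (Cs i)) ∧ C = ⋃ i, Cs i

/-- A Parikh-Muller tree automaton of dimension `s` over the alphabet `σ`.
Labels in `Σ × D` are modelled as pairs `(a, some d)` and labels in `Σ` as `(a, none)`. -/
structure PMTA (σ : Type) (s : ℕ) where
  /-- states -/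
  Q : Type
  finQ : Finite Q
  /-- counting states -/
  QP : Set Q
  /-- Muller states -/
  Qω : Set Q
  hdisj : Disjoint QP Qω
  hcover : QP ∪ Qω = Set.univ
  /-- initial state -/
  qI : Q
  /-- the finite set of counter increments -/
  D : Set (Vec s)
  hD : D.Finite
  /-- counting transitions -/
  ΔP : Set (Q × (σ × Vec s) × Q × Q)
  /-- Muller transitions -/
  Δω : Set (Q × σ × Q × Q)
  hΔP : ∀ t ∈ ΔP, t.1 ∈ QP ∪ {qI} ∧ t.2.1.2 ∈ D
  hΔω : ∀ t ∈ Δω, t.1 ∈ Qω ∪ {qI} ∧ t.2.2.1 ∈ Qω ∧ t.2.2.2 ∈ Qω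
  /-- the Muller acceptance family -/
  F : Set (Set Q)
  hF : ∀ X ∈ F, X ⊆ Qω
  /-- the semilinear Parikh constraint -/
  C : Set (Vec s)
  hC : IsSemilinearSetNat C

namespace PMTA

variable {σ : Type} {s : ℕ}

/-- A run of a PMTA on a tree `ζ` over `(Σ × D) ∪ Σ`. -/
def IsRun (A : PMTA σ s) (ζ : Pos → σ × Option (Vec s)) (κ : Pos → A.Q) : Prop :=
  κ [] = A.qI ∧
  (∀ (ρ : Pos) (d : Vec s), (ζ ρ).2 = some d →
      (κ ρ, ((ζ ρ).1, d), κ (ρ ++ [false]), κ (ρ ++ [true])) ∈ A.ΔP) ∧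
  (∀ ρ : Pos, (ζ ρ).2 = none →
      (κ ρ, (ζ ρ).1, κ (ρ ++ [false]), κ (ρ ++ [true])) ∈ A.Δω)

/-- The positions of `ζ` carrying a label from `Σ × D`. -/
def cntPos (ζ : Pos → σ × Option (Vec s)) : Set Pos := {ρ | (ζ ρ).2 ≠ none}

/-- The extended Parikh map: the sum of all `D`-components occurring in `ζ`. -/
noncomputable def parikh (ζ : Pos → σ × Option (Vec s)) : Vec s :=
  ∑ᶠ ρ : Pos, ((ζ ρ).2.getD 0)

/-- An accepting run: the counting part is finite, the Parikh constraint is satisfied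
whenever some counting position exists, all counter increments stem from `D`,
and every infinite path satisfies the Muller condition. -/
def IsAcceptingRun (A : PMTA σ s) (ζ : Pos → σ × Option (Vec s)) (κ : Pos → A.Q) : Prop :=
  A.IsRun ζ κ ∧ (cntPos ζ).Finite ∧
  ((cntPos ζ).Nonempty → parikh ζ ∈ A.C) ∧
  (∀ (ρ : Pos) (d : Vec s), (ζ ρ).2 = some d → d ∈ A.D) ∧
  ∀ π : ℕ → Pos, IsPath π → infOcc (fun i => κ (π i)) ∈ A.F

/-- The language of a PMTA: all `Σ`-projections of trees admitting an accepting run. -/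
def Language (A : PMTA σ s) : Set (Pos → σ) :=
  {ξ | ∃ (ζ : Pos → σ × Option (Vec s)) (κ : Pos → A.Q),
      (∀ ρ : Pos, (ζ ρ).1 = ξ ρ) ∧ A.IsAcceptingRun ζ κ}

end PMTA

/-- A tree language is PMTA-recognizable if it is the language of some PMTA
(of some dimension). -/
def PMTARecognizable {σ : Type} (L : Set (Pos → σ)) : Prop :=
  ∃ (s : ℕ) (A : PMTA σ s), A.Language = L

open Function Filter

namespace ENat

variable {ι : Type*}

lemma summable (f : ι → ℕ∞) : Summable f :=
  (hasSum_of_isLUB _ (isLUB_iSup (f := fun s : Finset ι => ∑ i ∈ s, f i))).summable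

lemma tsum_natCast_eq_finsum {g : ι → ℕ} (hg : (support g).Finite) :
    ∑' i, (g i : ℕ∞) = ((∑ᶠ i, g i : ℕ) : ℕ∞) := by
  rw [tsum_eq_finsum (HasFiniteSupport.fun_comp (f := g) hg Nat.cast_zero)]
  exact ((Nat.castAddMonoidHom ℕ∞).map_finsum hg).symm

lemma tsum_natCast_lt_top_iff {g : ι → ℕ} : ∑' i, (g i : ℕ∞) < ⊤ ↔ (support g).Finite := by
  refine ⟨fun h => ?_, fun hg => tsum_natCast_eq_finsum hg ▸ natCast_lt_top _⟩
  by_contra hinf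
  lift ∑' i, (g i : ℕ∞) to ℕ using h.ne with N hN
  obtain ⟨t, hts, htc⟩ := Set.Infinite.exists_subset_card_eq hinf (N + 1)
  have : ((N + 1 : ℕ) : ℕ∞) ≤ N := calc
    ((N + 1 : ℕ) : ℕ∞) = ∑ _i ∈ t, 1 := by simp [htc]
    _ ≤ ∑ i ∈ t, (g i : ℕ∞) := Finset.sum_le_sum fun i hi => by
        exact_mod_cast Nat.one_le_iff_ne_zero.mpr (hts hi)
    _ ≤ ∑' i, (g i : ℕ∞) := (summable _).sum_le_tsum t fun _ _ => zero_le
    _ = N := hN.symm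
  exact absurd (by exact_mod_cast this) (Nat.not_succ_le_self N)

lemma add_tsum_le_add_tsum_lt_top_iff (c d : ℕ) (g h : ι → ℕ) :
    (c + ∑' i, (g i : ℕ∞) ≤ d + ∑' i, (h i : ℕ∞) ∧ d + ∑' i, (h i : ℕ∞) < ⊤) ↔
      (support g).Finite ∧ (support h).Finite ∧ c + ∑ᶠ i, g i ≤ d + ∑ᶠ i, h i := by
  constructor
  · rintro ⟨hle, hlt⟩
    have hh : (support h).Finite := tsum_natCast_lt_top_iff.mp (le_add_self.trans_lt hlt)
    have hg : (support g).Finite :=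
      tsum_natCast_lt_top_iff.mp ((le_add_self.trans hle).trans_lt hlt)
    rw [tsum_natCast_eq_finsum hg, tsum_natCast_eq_finsum hh] at hle
    exact ⟨hg, hh, by exact_mod_cast hle⟩
  · rintro ⟨hg, hh, hle⟩
    rw [tsum_natCast_eq_finsum hg, tsum_natCast_eq_finsum hh]
    exact ⟨by exact_mod_cast hle, by exact_mod_cast natCast_lt_top _⟩

end ENat

lemma Function.support_vecCons_two {ι M : Type*} [Zero M] (a b : ι → M) :
    support (fun i => ![a i, b i]) = support a ∪ support b := by
  ext i
  simp [funext_iff, Fin.forall_fin_two, or_iff_not_imp_left]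

/-- The linear pieces have base points `(t, c - d)` with `t ≤ d - c` and periods `(1, 1)`,
`(0, 1)`. -/
lemma isSemilinearSetNat_add_le_add (c d : ℕ) :
    IsSemilinearSetNat {w : Vec 2 | c + w 0 ≤ d + w 1} := by
  refine ⟨d - c + 1, fun t => {w | ∃ m : Fin 2 → ℕ,
      w = ![(t : ℕ), c - d] + ∑ i, m i • ![![1, 1], ![0, 1]] i}, fun t => ⟨2, _, _, rfl⟩, ?_⟩
  ext w
  simp only [Set.mem_ofPred_eq, Set.mem_iUnion]
  constructor
  · intro hw
    refine ⟨⟨min (w 0) (d - c), by omega⟩, ![w 0 - min (w 0) (d - c),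
        w 1 - (c - d + (w 0 - min (w 0) (d - c)))], ?_⟩
    funext j
    fin_cases j <;> simp [Fin.sum_univ_two]; omega
  · rintro ⟨t, m, rfl⟩
    have ht := t.isLt
    simp [Fin.sum_univ_two]
    omega

lemma IsPath.length_eq {π : ℕ → Pos} (hπ : IsPath π) (i : ℕ) : (π i).length = i := by
  induction i with
  | zero => simp [hπ.1]
  | succ n ih =>
    obtain ⟨b, hb⟩ := hπ.2 n
    simp [hb, ih]

lemma infOcc_eq_singleton_of_eventually {Q : Type*} {g : ℕ → Q} {q : Q}
    (h : ∀ᶠ n in atTop, g n = q) : infOcc g = {q} := by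
  ext q'
  simp only [infOcc, ← Nat.frequently_atTop_iff_infinite, Set.mem_singleton_iff]
  refine ⟨fun hq' => ?_, fun hq' => hq' ▸ h.frequently⟩
  obtain ⟨n, hn, hn'⟩ := (hq'.and_eventually h).exists
  exact hn.symm.trans hn'

namespace PMTA

variable {Γ : Type} {s : ℕ}

def weightCounting (wt : Γ → Vec s) (hwt : (Set.range wt).Finite) (C : Set (Vec s))
    (hC : IsSemilinearSetNat C) : PMTA Γ s where
  Q := Bool
  finQ := inferInstance
  QP := {false}
  Qω := {true}
  hdisj := by simp
  hcover := by ext b; cases b <;> simp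
  qI := false
  D := Set.range wt
  hD := hwt
  ΔP := {t | t.1 = false ∧ t.2.1.2 = wt t.2.1.1}
  Δω := {t | t.1 = true ∧ wt t.2.1 = 0 ∧ t.2.2 = (true, true)}
  hΔP := fun t ht => ⟨by simp [ht.1], t.2.1.1, ht.2.symm⟩
  hΔω := fun t ht => by simp [ht.1, ht.2.2]
  F := {{true}}
  hF := by simp
  C := C
  hC := hC

variable {wt : Γ → Vec s} {hwt : (Set.range wt).Finite} {C : Set (Vec s)}
  {hC : IsSemilinearSetNat C}

lemma support_finite_and_finsum_mem_of_mem_language_weightCounting {ξ : Pos → Γ}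
    (hξ : ξ ∈ (weightCounting wt hwt C hC).Language) :
    (support (wt ∘ ξ)).Finite ∧ ∑ᶠ ρ, wt (ξ ρ) ∈ C := by
  obtain ⟨ζ, κ, hproj, ⟨hroot, hcount, hmuller⟩, hfin, hparikh, -, -⟩ := hξ
  have hnone : ∀ ρ, (ζ ρ).2 = none → κ ρ = true ∧ wt (ξ ρ) = 0 := fun ρ h => by
    obtain ⟨hκ, hwt0, -⟩ := hmuller ρ h
    exact ⟨hκ, hproj ρ ▸ hwt0⟩
  have hlabel : ∀ ρ, (ζ ρ).2.getD 0 = wt (ξ ρ) := fun ρ => by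
    cases h : (ζ ρ).2 with
    | none => exact (hnone ρ h).2.symm
    | some v => exact (hproj ρ ▸ (hcount ρ v h).2 :)
  have hroot_counts : [] ∈ cntPos ζ := fun h => by
    simpa [hroot, weightCounting] using (hnone [] h).1
  refine ⟨hfin.subset fun ρ hρ h => hρ ?_, ?_⟩
  · simpa [h] using (hlabel ρ).symm
  · have hmem := hparikh ⟨_, hroot_counts⟩
    simp only [parikh, hlabel] at hmem
    exact hmem

lemma mem_language_weightCounting_of_support_finite {ξ : Pos → Γ} (hfin : (support (wt ∘ ξ)).Finite)
    (hsum : ∑ᶠ ρ, wt (ξ ρ) ∈ C) : ξ ∈ (weightCounting wt hwt C hC).Language := by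
  obtain ⟨N, hN⟩ := (hfin.image List.length).bddAbove
  have hzero : ∀ ρ : Pos, N < ρ.length → wt (ξ ρ) = 0 := fun ρ hρ => by
    by_contra h
    exact hρ.not_ge (hN ⟨ρ, h, rfl⟩)
  let ζ : Pos → Γ × Option (Vec s) := fun ρ =>
    (ξ ρ, if ρ.length ≤ N then some (wt (ξ ρ)) else none)
  have hlabel : ∀ ρ, (ζ ρ).2.getD 0 = wt (ξ ρ) := fun ρ => by
    by_cases h : ρ.length ≤ N
    · simp [ζ, h]
    · simp [ζ, h, hzero ρ (not_le.mp h)]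
  refine ⟨ζ, fun ρ => decide (N < ρ.length), fun ρ => rfl, ⟨?_, ?_, ?_⟩, ?_, ?_, ?_, ?_⟩
  · simp [weightCounting]
  · intro ρ v h
    by_cases hρ : ρ.length ≤ N
    · simp only [ζ, hρ, if_true, Option.some.injEq] at h
      exact ⟨by simpa using hρ, h.symm⟩
    · simp [ζ, hρ] at h
  · intro ρ h
    have hρ : N < ρ.length := by simpa [ζ] using h
    simp only [ζ, hρ, decide_true, List.length_append, List.length_singleton,
      Nat.lt_succ_of_lt hρ]
    exact ⟨rfl, hzero ρ hρ, rfl⟩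
  · exact (List.finite_length_le Bool N).subset fun ρ hρ => by
      by_contra h
      simp [cntPos, ζ, h] at hρ
  · intro _
    simp only [parikh, hlabel]
    exact hsum
  · intro ρ v h
    by_cases hρ : ρ.length ≤ N
    · simp only [ζ, hρ, if_true, Option.some.injEq] at h
      exact ⟨_, h⟩
    · simp [ζ, hρ] at h
  · intro π hπ
    have hsink : ∀ᶠ i in atTop, decide (N < (π i).length) = true := by
      filter_upwards [eventually_gt_atTop N] with i hi
      simpa [hπ.length_eq] using hi
    show infOcc (fun i => decide (N < (π i).length)) ∈ ({{true}} : Set (Set Bool))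
    rw [infOcc_eq_singleton_of_eventually hsink]
    rfl

theorem language_weightCounting :
    (weightCounting wt hwt C hC).Language = {ξ | (support (wt ∘ ξ)).Finite ∧ ∑ᶠ ρ, wt (ξ ρ) ∈ C} :=
  Set.ext fun _ => ⟨support_finite_and_finsum_mem_of_mem_language_weightCounting,
    fun h => mem_language_weightCounting_of_support_finite h.1 h.2⟩

end PMTA

theorem parikh_constraint_recognizable_general {σ : Type} (r k : ℕ)
    (c d : ℕ) (cc : Fin r → ℕ) (dd : Fin k → ℕ) :
    ∃ A : PMTA (σ × Finset (Fin r ⊕ Fin k)) 2,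
      A.Language = {ξ : Pos → σ × Finset (Fin r ⊕ Fin k) |
        ((c : ℕ∞) + ∑' ρ : Pos,
            ((∑ i : Fin r, if Sum.inl i ∈ (ξ ρ).2 then cc i else 0 : ℕ) : ℕ∞)
          ≤ (d : ℕ∞) + ∑' ρ : Pos,
            ((∑ j : Fin k, if Sum.inr j ∈ (ξ ρ).2 then dd j else 0 : ℕ) : ℕ∞)) ∧
        (d : ℕ∞) + ∑' ρ : Pos,
            ((∑ j : Fin k, if Sum.inr j ∈ (ξ ρ).2 then dd j else 0 : ℕ) : ℕ∞) < ⊤} := by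
  let wX : Finset (Fin r ⊕ Fin k) → ℕ := fun θ => ∑ i, if Sum.inl i ∈ θ then cc i else 0
  let wY : Finset (Fin r ⊕ Fin k) → ℕ := fun θ => ∑ j, if Sum.inr j ∈ θ then dd j else 0
  let wt : σ × Finset (Fin r ⊕ Fin k) → Vec 2 := (fun θ => ![wX θ, wY θ]) ∘ Prod.snd
  have hwt : (Set.range wt).Finite :=
    (Set.finite_range _).subset (Set.range_comp_subset_range _ _)
  refine ⟨PMTA.weightCounting wt hwt _ (isSemilinearSetNat_add_le_add c d), ?_⟩
  ext ξ
  rw [PMTA.language_weightCounting]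
  simp only [Set.mem_ofPred_eq]
  rw [ENat.add_tsum_le_add_tsum_lt_top_iff]
  have hsupp : support (wt ∘ ξ) = support (fun ρ => wX (ξ ρ).2) ∪ support (fun ρ => wY (ξ ρ).2) :=
    support_vecCons_two _ _
  rw [hsupp, Set.finite_union, and_assoc]
  refine and_congr_right fun hX => and_congr_right fun hY => ?_
  have hfin : (support fun ρ => wt (ξ ρ)).Finite := hsupp ▸ hX.union hY
  rw [finsum_apply hfin, finsum_apply hfin]
  rfl

/-- The language of a Parikh constraint
`c + Σ_ρ Σ_{i : Xᵢ ∈ θ_ρ} cᵢ  ≤  d + Σ_ρ Σ_{j : Yⱼ ∈ θ_ρ} dⱼ  < ∞`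
over the alphabet `Σ × 𝒫({X₁,…,X_r,Y₁,…,Y_k})` is recognizable by a PMTA of
dimension 2.  The (possibly infinite) sums are evaluated in `ℕ∞`. -/
theorem parikh_constraint_recognizable {σ : Type} [Fintype σ] (r k : ℕ)
    (c d : ℕ) (cc : Fin r → ℕ) (dd : Fin k → ℕ)
    (hcc : ∀ i, 1 ≤ cc i) (hdd : ∀ j, 1 ≤ dd j) :
    ∃ A : PMTA (σ × Finset (Fin r ⊕ Fin k)) 2,
      A.Language = {ξ : Pos → σ × Finset (Fin r ⊕ Fin k) |
        ((c : ℕ∞) + ∑' ρ : Pos,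
            ((∑ i : Fin r, if Sum.inl i ∈ (ξ ρ).2 then cc i else 0 : ℕ) : ℕ∞)
          ≤ (d : ℕ∞) + ∑' ρ : Pos,
            ((∑ j : Fin k, if Sum.inr j ∈ (ξ ρ).2 then dd j else 0 : ℕ) : ℕ∞)) ∧
        (d : ℕ∞) + ∑' ρ : Pos,
            ((∑ j : Fin k, if Sum.inr j ∈ (ξ ρ).2 then dd j else 0 : ℕ) : ℕ∞) < ⊤} :=
  parikh_constraint_recognizable_general r k c d cc dd
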